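/- arXiv:1901.00493 — 2 statements merged into one kernel-verified Lean document; each statement's English description precedes it below -/
import Mathlib

section
/- For every nonnegative integer n, the partial sum S(n) = ∑_{m=0}^{n} σ_0(m) of the pentagonal number theorem sequence takes only the values -1, 0, 1. Specifically, for each k ≥ 0: S(n) = 1 when 6k² + k ≤ n < 6k² + 5k + 1; S(n) = -1 when 6k² + 7k + 2 ≤ n < 6k² + 11k + 5; and S(n) = 0 when 6k² - k ≤ n < 6k² + k or 6k² + 5k + 1 ≤ n < 6k² + 7k + 2. -/
/-- Coefficient of `x^n` in Euler's product `∏_{m ≥ 1} (1 - x^m)` (the pentagonal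
number theorem sequence); factors with `m > n` do not affect this coefficient, so the
product may be truncated at `m = n`. -/
noncomputable def sigma0 (n : ℕ) : ℤ :=
  PowerSeries.coeff (R := ℤ) n (∏ m ∈ Finset.Icc 1 n, (1 - PowerSeries.X ^ m))

/-- Coefficient of `x^n` in `∏_{m ≥ 1, m ≠ j} (1 - x^m)` (the `j`-laced sequence);
for `j = 0` this is the full Euler product. -/
noncomputable def sigmaJ (j n : ℕ) : ℤ :=
  PowerSeries.coeff (R := ℤ) n (∏ m ∈ (Finset.Icc 1 n).erase j, (1 - PowerSeries.X ^ m))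

/-- `ρ(0) = 1`, and for `n ≥ 1`, `ρ(n)` is the number of positive divisors of `n`. -/
def rho (n : ℕ) : ℤ := if n = 0 then 1 else (n.divisors.card : ℤ)

/-- Integer-indexed `ρ`, vanishing on negative arguments. -/
def rhoZ (m : ℤ) : ℤ := if 0 ≤ m then rho m.toNat else 0

/-- The σ-sequence: `σ(n) = ∑_{j=0}^{n} σ_j(n - j)`, the coefficient of `x^n` in the
σ-function `∑_{h ≥ 0} x^h ∏_{m ≥ 1, m ≠ h} (1 - x^m)`. -/
noncomputable def sigmaSeq (n : ℕ) : ℤ := ∑ j ∈ Finset.range (n+1), sigmaJ j (n - j)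

/-- Partial sums of the pentagonal number theorem sequence. -/
noncomputable def S (n : ℕ) : ℤ := ∑ m ∈ Finset.range (n+1), sigma0 m

/-! By the pentagonal number theorem, with the terms grouped in pairs,
`∏ (1 - x ^ m) = ∑_{j ≥ 0} (-1) ^ j (x ^ p(-j) - x ^ p(j + 1))`, where `p k = k (3k - 1) / 2`
and `p 0 < p 1 < p (-1) < p 2 < p (-2) < ⋯`. Summing the coefficients of degree `≤ n`, the
`j`-th pair contributes `(-1) ^ j` exactly when `p (-j) ≤ n < p (j + 1)`. These intervals are
disjoint, so `S n = (-1) ^ j` on `[p (-j), p (j + 1))` and `S n = 0` on the gaps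
`[p (j + 1), p (-(j + 1)))`; the intervals of the statement are those with `j = 2k` and
`j = 2k + 1`. -/

open Finset PowerSeries PowerSeries.WithPiTopology

theorem PowerSeries.coeff_mul_prod_one_sub_X_pow {R : Type*} [CommRing R] {n : ℕ} {ι : Type*}
    {t : Finset ι} {g : ι → ℕ} (hg : ∀ i ∈ t, n < g i) (f : R⟦X⟧) :
    coeff n (f * ∏ i ∈ t, (1 - X ^ g i)) = coeff n f := by
  classical
  induction t using Finset.induction_on with
  | empty => simp
  | insert a t ha ih =>
    rw [prod_insert ha, mul_left_comm, sub_mul, one_mul, map_sub, mul_comm (X ^ g a),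
      coeff_mul_X_pow', if_neg (hg a (mem_insert_self a t)).not_ge, sub_zero,
      ih fun i hi => hg i (mem_insert_of_mem hi)]

theorem sigma0_eq_coeff_pentagonalSeries (n : ℕ) :
    sigma0 n = coeff n (pentagonalSeries ℤ) := by
  obtain ⟨s, hs⟩ := Filter.eventually_atTop.1 (coeff_prod_one_sub_X_pow_eventually_eq ℤ n)
  rw [← hs (s ∪ range n) subset_union_left, ← prod_sdiff subset_union_right, mul_comm,
    coeff_mul_prod_one_sub_X_pow (fun i hi => by simpa using (mem_sdiff.1 hi).2), sigma0,
    range_eq_Ico, prod_Ico_add' (fun m => (1 - X ^ m : ℤ⟦X⟧))]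
  rfl

theorem PowerSeries.sum_range_coeff_X_pow {R : Type*} [Semiring R] (n a : ℕ) :
    ∑ m ∈ range (n + 1), coeff m (X ^ a : R⟦X⟧) = if a ≤ n then 1 else 0 := by
  simp [coeff_X_pow]

theorem hasSum_S (n : ℕ) :
    HasSum
      (fun j : ℕ =>
        if pentagonal (-j) ≤ n ∧ n < pentagonal (j + 1) then (-1 : ℤ) ^ j else 0)
      (S n) := by
  have h := fun m (_ : m ∈ range (n + 1)) =>
    (hasSum_pow_pentagonal_sub_pentagonalSeries ℤ).map (coeff m) (continuous_coeff ℤ m)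
  convert hasSum_sum h using 1
  · ext j
    have hlt : pentagonal (-j) < pentagonal (j + 1) :=
      pentagonal_neg_lt_pentagonal_add_one (Int.natCast_nonneg j)
    have hC : ((-1 : ℤ⟦X⟧) ^ j) = C ((-1) ^ j) := by simp
    simp only [Function.comp_apply, hC, coeff_C_mul, ← mul_sum, map_sub, sum_sub_distrib,
      sum_range_coeff_X_pow]
    split_ifs <;> omega
  · simp [S, sigma0_eq_coeff_pentagonalSeries]

theorem Monotone.eq_of_mem_Ico_of_mem_Ico {α : Type*} [LinearOrder α] {e : ℕ → α}
    (he : Monotone e) {i j : ℕ} {x : α} (hi : e i ≤ x) (hi' : x < e (i + 1)) (hj : e j ≤ x)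
    (hj' : x < e (j + 1)) : i = j := by
  have := he.reflect_lt (hi.trans_lt hj')
  have := he.reflect_lt (hj.trans_lt hi')
  omega

theorem StrictMono.exists_mem_Ico {e : ℕ → ℕ} (he : StrictMono e) (h0 : e 0 = 0) (n : ℕ) :
    ∃ i, e i ≤ n ∧ n < e (i + 1) := by
  induction n with
  | zero => exact ⟨0, h0.le, (Nat.zero_le _).trans_lt (he Nat.zero_lt_one)⟩
  | succ n ih =>
    obtain ⟨i, hi, hi'⟩ := ih
    rcases (Nat.succ_le_of_lt hi').lt_or_eq with h | h
    · exact ⟨i, by omega, h⟩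
    · exact ⟨i + 1, h.ge, h.trans_lt (he (Nat.lt_succ_self _))⟩

/-- The generalized pentagonal numbers `0, 1, 2, 5, 7, 12, 15, …` in increasing order:
the `2j`-th is `pentagonal (-j)` and the `(2j+1)`-th is `pentagonal (j + 1)`. -/
def genPentagonal (i : ℕ) : ℕ :=
  pentagonal (if Even i then -((i / 2 : ℕ) : ℤ) else (i / 2 : ℕ) + 1)

theorem genPentagonal_zero : genPentagonal 0 = 0 := rfl

theorem genPentagonal_two_mul (j : ℕ) : genPentagonal (2 * j) = pentagonal (-j) := by
  simp [genPentagonal]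

theorem genPentagonal_two_mul_add_one (j : ℕ) :
    genPentagonal (2 * j + 1) = pentagonal (j + 1) := by
  simp [genPentagonal, Nat.add_div]

theorem strictMono_genPentagonal : StrictMono genPentagonal := by
  refine strictMono_nat_of_lt_succ fun i => ?_
  obtain ⟨j, rfl | rfl⟩ := Nat.even_or_odd' i
  · rw [genPentagonal_two_mul, genPentagonal_two_mul_add_one]
    exact pentagonal_neg_lt_pentagonal_add_one (Int.natCast_nonneg j)
  · rw [show 2 * j + 1 + 1 = 2 * (j + 1) by ring, genPentagonal_two_mul,
      genPentagonal_two_mul_add_one]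
    exact_mod_cast pentagonal_lt_pentagonal_neg (by positivity : (0 : ℤ) < j + 1)

theorem two_mul_genPentagonal_two_mul (j : ℕ) : 2 * genPentagonal (2 * j) = j * (3 * j + 1) := by
  rw [genPentagonal_two_mul]
  exact_mod_cast two_mul_natCast_pentagonal_neg j

theorem two_mul_genPentagonal_two_mul_add_one (j : ℕ) :
    2 * genPentagonal (2 * j + 1) = (j + 1) * (3 * j + 2) := by
  rw [genPentagonal_two_mul_add_one]
  have := two_mul_natCast_pentagonal (j + 1)
  linarith

theorem pentagonal_neg_le_and_lt_pentagonal_add_one_iff {n i m : ℕ}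
    (hm : genPentagonal m ≤ n) (hm' : n < genPentagonal (m + 1)) :
    (pentagonal (-i) ≤ n ∧ n < pentagonal (i + 1)) ↔ 2 * i = m := by
  rw [← genPentagonal_two_mul, ← genPentagonal_two_mul_add_one]
  refine ⟨fun h => strictMono_genPentagonal.monotone.eq_of_mem_Ico_of_mem_Ico h.1 h.2 hm hm',
    ?_⟩
  rintro rfl
  exact ⟨hm, hm'⟩

theorem S_eq_neg_one_pow {n j : ℕ} (h : genPentagonal (2 * j) ≤ n)
    (h' : n < genPentagonal (2 * j + 1)) : S n = (-1) ^ j := by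
  refine (hasSum_S n).unique ?_
  convert hasSum_single j fun i hi => if_neg ?_ using 1
  · simp [(pentagonal_neg_le_and_lt_pentagonal_add_one_iff h h').2 rfl]
  · rw [pentagonal_neg_le_and_lt_pentagonal_add_one_iff h h']
    omega

theorem S_eq_zero {n j : ℕ} (h : genPentagonal (2 * j + 1) ≤ n)
    (h' : n < genPentagonal (2 * (j + 1))) : S n = 0 := by
  refine (hasSum_S n).unique ?_
  convert hasSum_zero using 1
  funext i
  rw [if_neg (by rw [pentagonal_neg_le_and_lt_pentagonal_add_one_iff h h']; omega)]

/-- `S(n) ∈ {-1, 0, 1}` for all `n`, with: `S(n) = 1` on `[6k²+k, 6k²+5k+1)`,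
`S(n) = -1` on `[6k²+7k+2, 6k²+11k+5)`, and `S(n) = 0` on `[6k²-k, 6k²+k)` and on
`[6k²+5k+1, 6k²+7k+2)`, for every `k ≥ 0`. -/
theorem stmt14 (n : ℕ) :
    (S n = -1 ∨ S n = 0 ∨ S n = 1) ∧
    (∀ k : ℕ, 6 * k ^ 2 + k ≤ n → n < 6 * k ^ 2 + 5 * k + 1 → S n = 1) ∧
    (∀ k : ℕ, 6 * k ^ 2 + 7 * k + 2 ≤ n → n < 6 * k ^ 2 + 11 * k + 5 → S n = -1) ∧
    (∀ k : ℕ, (6 * k ^ 2 - k ≤ n ∧ n < 6 * k ^ 2 + k) ∨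
        (6 * k ^ 2 + 5 * k + 1 ≤ n ∧ n < 6 * k ^ 2 + 7 * k + 2) → S n = 0) := by
  refine ⟨?_, fun k h h' => ?_, fun k h h' => ?_, fun k h => ?_⟩
  · obtain ⟨i, hi, hi'⟩ := strictMono_genPentagonal.exists_mem_Ico genPentagonal_zero n
    obtain ⟨j, rfl | rfl⟩ := Nat.even_or_odd' i
    · rw [S_eq_neg_one_pow hi hi']
      rcases neg_one_pow_eq_or ℤ j with h | h <;> simp [h]
    · simp [S_eq_zero hi (by rwa [mul_add_one])]
  · rw [S_eq_neg_one_pow (j := 2 * k) (by linarith [two_mul_genPentagonal_two_mul (2 * k)])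
      (by linarith [two_mul_genPentagonal_two_mul_add_one (2 * k)]), pow_mul]
    norm_num
  · rw [S_eq_neg_one_pow (j := 2 * k + 1)
      (by linarith [two_mul_genPentagonal_two_mul (2 * k + 1)])
      (by linarith [two_mul_genPentagonal_two_mul_add_one (2 * k + 1)]), pow_succ, pow_mul]
    norm_num
  · rcases h with ⟨h, h'⟩ | ⟨h, h'⟩
    · obtain ⟨k, rfl⟩ : ∃ k', k = k' + 1 := Nat.exists_eq_add_one.2 (by nlinarith)
      zify [show k + 1 ≤ 6 * (k + 1) ^ 2 by nlinarith] at h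
      exact S_eq_zero (j := 2 * k + 1)
        (by linarith [two_mul_genPentagonal_two_mul_add_one (2 * k + 1)])
        (by linarith [two_mul_genPentagonal_two_mul (2 * k + 2)])
    · exact S_eq_zero (j := 2 * k) (by linarith [two_mul_genPentagonal_two_mul_add_one (2 * k)])
        (by linarith [two_mul_genPentagonal_two_mul (2 * k + 1)])
end

section
/- For every n ≥ 1, ρ(n) = σ(n) + ∑_{i ∈ ℤ, i ≠ 0} (-1)^{i+1} ρ(n - (3i² + i)/2), a finite sum, where ρ(m) = 0 for m < 0 and ρ(m) is the number of divisors of m ≥ 1; this recursion together with ρ(0) = 1 = σ(0) determines ρ from σ. -/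
open PowerSeries Finset PowerSeries.WithPiTopology

section

variable {R : Type*} [CommRing R]

theorem coeff_one_sub_X_pow_mul_of_lt {k m : ℕ} (h : k < m) (f : R⟦X⟧) :
    coeff k ((1 - X ^ m) * f) = coeff k f := by
  rw [sub_mul, one_mul, map_sub, coeff_X_pow_mul', if_neg (by omega), sub_zero]

theorem coeff_prod_one_sub_X_pow_mul_of_lt {k : ℕ} {s : Finset ℕ} (h : ∀ m ∈ s, k < m)
    (f : R⟦X⟧) : coeff k ((∏ m ∈ s, (1 - X ^ m)) * f) = coeff k f := by
  induction s using Finset.induction_on with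
  | empty => rw [prod_empty, one_mul]
  | insert a s ha ih =>
    rw [prod_insert ha, mul_assoc, coeff_one_sub_X_pow_mul_of_lt (h a (mem_insert_self a s)),
      ih fun m hm => h m (mem_insert_of_mem hm)]

theorem coeff_prod_one_sub_X_pow_of_subset {k : ℕ} {s t : Finset ℕ} (hst : s ⊆ t)
    (h : ∀ m ∈ t, m ∉ s → k < m) :
    coeff k (∏ m ∈ t, (1 - X ^ m) : R⟦X⟧) = coeff k (∏ m ∈ s, (1 - X ^ m)) := by
  rw [← prod_sdiff hst, coeff_prod_one_sub_X_pow_mul_of_lt fun m hm =>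
    h m (mem_sdiff.1 hm).1 (mem_sdiff.1 hm).2]

theorem coeff_mul_eq_of_coeff_eq {n : ℕ} {f g : R⟦X⟧} (h : ∀ k ≤ n, coeff k f = coeff k g)
    (F : R⟦X⟧) : coeff n (f * F) = coeff n (g * F) := by
  rw [coeff_mul, coeff_mul]
  refine sum_congr rfl fun p hp => ?_
  rw [h p.1 (by rw [HasAntidiagonal.mem_antidiagonal] at hp; omega)]

theorem coeff_prod_Icc_one_sub_X_pow_eq_coeff_pentagonalSeries {k N : ℕ} (hk : k ≤ N) :
    coeff k (∏ m ∈ Icc 1 N, (1 - X ^ m) : R⟦X⟧) = coeff k (pentagonalSeries R) := by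
  obtain ⟨s, hs⟩ := Filter.eventually_atTop.1 (coeff_prod_one_sub_X_pow_eventually_eq R k)
  have hshift : ∏ i ∈ s ∪ range N, (1 - X ^ (i + 1) : R⟦X⟧) =
      ∏ m ∈ (s ∪ range N).image (· + 1), (1 - X ^ m) :=
    (prod_image (f := fun m => 1 - X ^ m) (add_left_injective 1).injOn).symm
  rw [← hs _ subset_union_left, hshift]
  refine (coeff_prod_one_sub_X_pow_of_subset (fun m hm => ?_) fun m hm hm' => ?_).symm
  · simp only [mem_Icc] at hm
    exact mem_image.2 ⟨m - 1, mem_union_right _ (mem_range.2 (by omega)), by omega⟩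
  · obtain ⟨i, -, rfl⟩ := mem_image.1 hm
    simp only [mem_Icc] at hm'
    omega

theorem natAbs_le_pentagonal (k : ℤ) : k.natAbs ≤ pentagonal k := by
  zify
  have := two_mul_natCast_pentagonal k
  rcases abs_cases k with ⟨h, -⟩ | ⟨h, -⟩ <;> rw [h] <;> nlinarith

theorem coeff_pentagonalSeries_mul (n : ℕ) (F : R⟦X⟧) :
    coeff n (pentagonalSeries R * F) =
      ∑ k ∈ Icc (-(n : ℤ) - 1) (n + 1), (-1) ^ k.natAbs * coeff n (X ^ pentagonal k * F) := by
  let : TopologicalSpace R := ⊥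
  have : DiscreteTopology R := ⟨rfl⟩
  have hC (m : ℕ) : ((-1) ^ m : R⟦X⟧) = C ((-1) ^ m) := by simp
  have hsum : HasSum (fun k : ℤ => (-1) ^ k.natAbs * coeff n (X ^ pentagonal k * F))
      (coeff n (pentagonalSeries R * F)) := by
    have := ((hasSum_pentagonalSeries R).mul_right F).map (coeff n) (continuous_coeff R n)
    simpa only [Int.coe_negOnePow, Function.comp_def, mul_assoc, hC, coeff_C_mul] using this
  refine hsum.unique (hasSum_sum_of_ne_finset_zero fun k hk => ?_)
  have := natAbs_le_pentagonal k
  rw [mem_Icc] at hk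
  rw [coeff_X_pow_mul', if_neg (by omega), mul_zero]

noncomputable def multiplesSeries (d : ℕ) : R⟦X⟧ := mk fun k => if 0 < k ∧ d ∣ k then 1 else 0

theorem one_sub_X_pow_mul_multiplesSeries {d : ℕ} (hd : 0 < d) :
    (1 - X ^ d) * multiplesSeries d = (X ^ d : R⟦X⟧) := by
  ext k
  simp only [sub_mul, one_mul, map_sub, coeff_X_pow_mul', coeff_X_pow, multiplesSeries, coeff_mk]
  split_ifs <;> simp_all
  · omega
  · obtain ⟨hk, hdk⟩ := ‹0 < k ∧ d ∣ k›
    exact absurd (Nat.le_of_dvd hk hdk) (by omega)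
  · omega

end

noncomputable def rhoSeries : ℤ⟦X⟧ := mk fun k => rho k

theorem coeff_rhoSeries_of_le {k n : ℕ} (hk : k ≤ n) :
    coeff k rhoSeries = coeff k (1 + ∑ d ∈ Icc 1 n, multiplesSeries d) := by
  rcases Nat.eq_zero_or_pos k with rfl | hk0
  · simp [rhoSeries, rho, multiplesSeries]
  have hdiv : {d ∈ Icc 1 n | d ∣ k} = k.divisors := by
    ext d
    simp only [mem_filter, mem_Icc, Nat.mem_divisors]
    exact ⟨fun h => ⟨h.2, hk0.ne'⟩, fun h =>
      ⟨⟨Nat.pos_of_dvd_of_pos h.1 hk0, (Nat.le_of_dvd hk0 h.1).trans hk⟩, h.1⟩⟩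
  simp [rhoSeries, rho, multiplesSeries, hk0, hk0.ne', ← hdiv]

theorem coeff_X_pow_mul_rhoSeries (n a : ℕ) : coeff n (X ^ a * rhoSeries) = rhoZ (n - a) := by
  rw [coeff_X_pow_mul', rhoZ]
  split_ifs
  · rw [rhoSeries, coeff_mk]
    congr
    omega
  all_goals omega

theorem sigmaJ_eq_coeff_prod_erase {j m N : ℕ} (h : m ≤ N) :
    sigmaJ j m = coeff m (∏ i ∈ (Icc 1 N).erase j, (1 - X ^ i)) :=
  (coeff_prod_one_sub_X_pow_of_subset (erase_subset_erase j (Icc_subset_Icc_right h))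
    fun i hi hi' => by simp only [mem_erase, mem_Icc] at hi hi'; omega).symm

theorem sigmaSeq_eq_coeff_mul_rhoSeries (n : ℕ) :
    sigmaSeq n = coeff n ((∏ m ∈ Icc 1 n, (1 - X ^ m)) * rhoSeries) := by
  have h0 : coeff n (∏ m ∈ Icc 1 n, (1 - X ^ m)) = sigmaJ 0 (n - 0) := by
    rw [Nat.sub_zero, sigmaJ, erase_eq_of_notMem (by simp)]
  have hd : ∀ d ∈ Icc 1 n,
      coeff n (multiplesSeries d * ∏ m ∈ Icc 1 n, (1 - X ^ m)) = sigmaJ d (n - d) := by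
    intro d hd
    rw [← prod_erase_mul _ _ hd, mul_left_comm, mul_comm (multiplesSeries d),
      one_sub_X_pow_mul_multiplesSeries (mem_Icc.1 hd).1, coeff_mul_X_pow',
      if_pos (mem_Icc.1 hd).2, sigmaJ_eq_coeff_prod_erase (Nat.sub_le n d)]
  rw [mul_comm, coeff_mul_eq_of_coeff_eq (fun k hk => coeff_rhoSeries_of_le hk), add_mul,
    one_mul, sum_mul, map_add, map_sum, sum_congr rfl hd, h0, sigmaSeq, range_eq_Ico,
    sum_eq_sum_Ico_succ_bot n.succ_pos, zero_add, Nat.succ_eq_add_one, Ico_add_one_right_eq_Icc]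

theorem sigmaSeq_eq_sum_pentagonal (n : ℕ) :
    sigmaSeq n = ∑ k ∈ Icc (-(n : ℤ) - 1) (n + 1), (-1) ^ k.natAbs * rhoZ (n - pentagonal k) := by
  rw [sigmaSeq_eq_coeff_mul_rhoSeries, coeff_mul_eq_of_coeff_eq
    (fun k hk => coeff_prod_Icc_one_sub_X_pow_eq_coeff_pentagonalSeries hk),
    coeff_pentagonalSeries_mul]
  simp_rw [coeff_X_pow_mul_rhoSeries]

theorem sigmaSeq_eq_sum_pentagonal_neg (n : ℕ) :
    sigmaSeq n = ∑ i ∈ Icc (-(n : ℤ) - 1) (n + 1),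
      (-1) ^ i.natAbs * rhoZ (n - (3 * i ^ 2 + i) / 2) := by
  rw [sigmaSeq_eq_sum_pentagonal]
  refine sum_nbij' (fun k => -k) (fun i => -i) (fun k hk => ?_) (fun i hi => ?_)
    (fun _ _ => neg_neg _) (fun _ _ => neg_neg _) fun k _ => ?_
  · simp only [mem_Icc] at hk ⊢; omega
  · simp only [mem_Icc] at hi ⊢; omega
  · rw [Int.natAbs_neg, natCast_pentagonal]
    congr 4
    ring

theorem stmt16_general (n : ℕ) :
    rhoZ n = sigmaSeq n +
      ∑ i ∈ (Finset.Icc (-(n : ℤ) - 1) ((n : ℤ) + 1)).erase 0,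
        (-1) ^ (i.natAbs + 1) * rhoZ ((n : ℤ) - (3 * i ^ 2 + i) / 2) ∧
    rhoZ 0 = 1 ∧ sigmaSeq 0 = 1 := by
  refine ⟨?_, by simp [rhoZ, rho], by simp [sigmaSeq, sigmaJ]⟩
  rw [sigmaSeq_eq_sum_pentagonal_neg,
    ← add_sum_erase _ _ (mem_Icc.2 ⟨by omega, by omega⟩ : (0 : ℤ) ∈ _)]
  simp only [pow_succ, mul_neg_one, neg_mul, sum_neg_distrib]
  simp

/-- The pentagonal algorithm for `ρ`: for `n ≥ 1`,
`ρ(n) = σ(n) + ∑_{i ∈ ℤ, i ≠ 0} (-1)^{i+1} ρ(n - (3i²+i)/2)`, a finite sum (indices with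
`|i| > n + 1` contribute nothing); together with `ρ(0) = 1 = σ(0)` this recursion
determines `ρ` from `σ`. -/
theorem stmt16 (n : ℕ) (hn : 1 ≤ n) :
    rhoZ n = sigmaSeq n +
      ∑ i ∈ (Finset.Icc (-(n : ℤ) - 1) ((n : ℤ) + 1)).erase 0,
        (-1) ^ (i.natAbs + 1) * rhoZ ((n : ℤ) - (3 * i ^ 2 + i) / 2) ∧
    rhoZ 0 = 1 ∧ sigmaSeq 0 = 1 :=
  stmt16_general n
end
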